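/- Let λ : C → D be a morphism of coalgebras over a field K such that C is finite-dimensional, and suppose there exist a D-bicomodule morphism α : D → C and a C-bicomodule morphism β : C □_D C → C with β∘(αλ⊗id_C)∘Δ_C = β∘(id_C⊗αλ)∘Δ_C = id_C. Then the algebra extension λ* : D* → C* is a Frobenius extension of rings: there exist E ∈ Hom_{D*-bimod}(C*, D*) and u ∈ Hom_{C*-bimod}(C*, C*⊗_{D*}C*) with μ∘(λ*E⊗id)∘u = μ∘(id⊗λ*E)∘u = id_{C*}, where μ : C*⊗_{D*}C* → C* is induced by convolution multiplication. -/

import Mathlib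

set_option maxHeartbeats 1000000
set_option synthInstance.maxHeartbeats 400000


open TensorProduct LinearMap

/-- The convolution product on the dual of a "coalgebra" `(C, Δ)`, as a bilinear
map. -/
noncomputable def convBilin {K C : Type*} [Field K] [AddCommGroup C] [Module K C]
    (Δ : C →ₗ[K] C ⊗[K] C) :
    (C →ₗ[K] K) →ₗ[K] (C →ₗ[K] K) →ₗ[K] (C →ₗ[K] K) :=
  LinearMap.mk₂ K
    (fun f g => (TensorProduct.lid K K).toLinearMap ∘ₗ TensorProduct.map f g ∘ₗ Δ)
    (fun f f' g => by ext c; simp [TensorProduct.map_add_left])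
    (fun a f g => by ext c; simp [TensorProduct.map_smul_left])
    (fun f g g' => by ext c; simp [TensorProduct.map_add_right])
    (fun f a g => by ext c; simp [TensorProduct.map_smul_right])

namespace Stmt12Aux

variable {K : Type*} [Field K]

section ev2

variable {M N P : Type*} [AddCommGroup M] [Module K M] [AddCommGroup N] [Module K N]
  [AddCommGroup P] [Module K P]

/-- The evaluation functional `m ⊗ n ↦ f m * g n`. -/
noncomputable def ev2 (f : M →ₗ[K] K) (g : N →ₗ[K] K) : M ⊗[K] N →ₗ[K] K :=
  TensorProduct.lift (f.smulRight g)

@[simp] lemma ev2_tmul (f : M →ₗ[K] K) (g : N →ₗ[K] K) (m : M) (n : N) :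
    ev2 f g (m ⊗ₜ[K] n) = f m * g n := by
  simp [ev2, smul_eq_mul]

lemma ev2_lTensor (f : M →ₗ[K] K) (g : N →ₗ[K] K) (p : P →ₗ[K] N) (t : M ⊗[K] P) :
    ev2 f g (lTensor M p t) = ev2 f (g ∘ₗ p) t := by
  induction t using TensorProduct.induction_on with
  | zero => simp
  | tmul a b => simp
  | add x y hx hy => simp [hx, hy]

lemma ev2_rTensor (f : M →ₗ[K] K) (g : N →ₗ[K] K) (p : P →ₗ[K] M) (t : P ⊗[K] N) :
    ev2 f g (rTensor N p t) = ev2 (f ∘ₗ p) g t := by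
  induction t using TensorProduct.induction_on with
  | zero => simp
  | tmul a b => simp
  | add x y hx hy => simp [hx, hy]

lemma dualDistrib_eq_ev2 (f : M →ₗ[K] K) (g : N →ₗ[K] K) :
    TensorProduct.dualDistrib K M N (f ⊗ₜ[K] g) = ev2 f g := by
  apply TensorProduct.ext'
  intro m n
  simp

end ev2

section conv

variable {C : Type*} [AddCommGroup C] [Module K C]

lemma convBilin_apply (Δ : C →ₗ[K] C ⊗[K] C) (f g : C →ₗ[K] K) (c : C) :
    convBilin Δ f g c = ev2 f g (Δ c) := by
  simp only [convBilin, LinearMap.mk₂_apply, LinearMap.coe_comp, Function.comp_apply,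
    LinearEquiv.coe_coe]
  generalize Δ c = t
  induction t using TensorProduct.induction_on with
  | zero => simp
  | tmul a b => simp [smul_eq_mul]
  | add x y hx hy => simp [hx, hy]

lemma ev2_eq_lid (c f : C →ₗ[K] K) (t : C ⊗[K] C) :
    ev2 c f t = f ((TensorProduct.lid K C) (rTensor C c t)) := by
  induction t using TensorProduct.induction_on with
  | zero => simp
  | tmul a b => simp [smul_eq_mul]
  | add x y hx hy => simp [hx, hy]

lemma ev2_eq_rid (f c : C →ₗ[K] K) (t : C ⊗[K] C) :
    ev2 f c t = f ((TensorProduct.rid K C) (lTensor C c t)) := by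
  induction t using TensorProduct.induction_on with
  | zero => simp
  | tmul a b => simp [smul_eq_mul, mul_comm]
  | add x y hx hy => simp [hx, hy]

end conv

/-- Pure tensor functionals separate points of `C ⊗ (D ⊗ C)`. -/
lemma separates {C D : Type*} [AddCommGroup C] [Module K C] [AddCommGroup D] [Module K D]
    (z : C ⊗[K] (D ⊗[K] C))
    (h : ∀ (g : C →ₗ[K] K) (d : D →ₗ[K] K) (h' : C →ₗ[K] K), ev2 g (ev2 d h') z = 0) :
    z = 0 := by
  let bC := Module.Free.chooseBasis K C
  let bD := Module.Free.chooseBasis K D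
  have key : ∀ (y : D ⊗[K] C) (j) (k),
      (bD.tensorProduct bC).repr y (j, k) = ev2 (bD.coord j) (bC.coord k) y := by
    intro y j k
    induction y using TensorProduct.induction_on with
    | zero => simp
    | tmul a b => simp [Module.Basis.tensorProduct_repr_tmul_apply, Module.Basis.coord_apply, mul_comm]
    | add x y hx hy => simp [hx, hy]
  have key2 : ∀ (w : C ⊗[K] (D ⊗[K] C)) (i) (j) (k),
      (bC.tensorProduct (bD.tensorProduct bC)).repr w (i, (j, k))
        = ev2 (bC.coord i) (ev2 (bD.coord j) (bC.coord k)) w := by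
    intro w i j k
    induction w using TensorProduct.induction_on with
    | zero => simp
    | tmul a b => simp [Module.Basis.tensorProduct_repr_tmul_apply, Module.Basis.coord_apply, key, mul_comm]
    | add x y hx hy => simp [hx, hy]
  have hrepr : (bC.tensorProduct (bD.tensorProduct bC)).repr z = 0 := by
    ext p
    obtain ⟨i, j, k⟩ := p
    simp [key2, h]
  exact (LinearEquiv.map_eq_zero_iff _).mp hrepr

end Stmt12Aux

open Stmt12Aux

/-- let `λ : C → D` be a coalgebra morphism with `C`
finite-dimensional, and suppose there are a `D`-bicomodule morphism `α : D → C`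
and a `C`-bicomodule morphism `β : C □_D C → C` with
`β∘(αλ⊗id)∘Δ = β∘(id⊗αλ)∘Δ = id_C`.  Then `λ* : D* → C*` is a Frobenius
extension of rings: there are a `D*`-bimodule map `E : C* → D*` and a
`C*`-bimodule map `u : C* → C* ⊗_{D*} C*` with `μ∘(λ*E⊗1)∘u = μ∘(1⊗λ*E)∘u = 1`.
Here `C* ⊗_{D*} C*` is realized as the quotient of `C* ⊗_K C*` by the span of the
`D*`-balancing relations, and `u` is given by a lift `u₀ : C* → C* ⊗_K C*`. -/
theorem stmt12 {K C D : Type*} [Field K]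
    [AddCommGroup C] [Module K C] [AddCommGroup D] [Module K D]
    [FiniteDimensional K C]
    (ΔC : C →ₗ[K] C ⊗[K] C) (εC : C →ₗ[K] K)
    (ΔD : D →ₗ[K] D ⊗[K] D) (εD : D →ₗ[K] K)
    (hcoC : (TensorProduct.assoc K C C C).toLinearMap ∘ₗ rTensor C ΔC ∘ₗ ΔC
      = lTensor C ΔC ∘ₗ ΔC)
    (hclC : (TensorProduct.lid K C).toLinearMap ∘ₗ rTensor C εC ∘ₗ ΔC = LinearMap.id)
    (hcrC : (TensorProduct.rid K C).toLinearMap ∘ₗ lTensor C εC ∘ₗ ΔC = LinearMap.id)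
    (hcoD : (TensorProduct.assoc K D D D).toLinearMap ∘ₗ rTensor D ΔD ∘ₗ ΔD
      = lTensor D ΔD ∘ₗ ΔD)
    (hclD : (TensorProduct.lid K D).toLinearMap ∘ₗ rTensor D εD ∘ₗ ΔD = LinearMap.id)
    (hcrD : (TensorProduct.rid K D).toLinearMap ∘ₗ lTensor D εD ∘ₗ ΔD = LinearMap.id)
    (lam : C →ₗ[K] D)
    (hlamΔ : TensorProduct.map lam lam ∘ₗ ΔC = ΔD ∘ₗ lam)
    (hlamε : εD ∘ₗ lam = εC)
    -- `α : D → C` is a morphism of `D`-bicomodules: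
    (α : D →ₗ[K] C)
    (hαr : (lTensor C lam ∘ₗ ΔC) ∘ₗ α = rTensor D α ∘ₗ ΔD)
    (hαl : (rTensor C lam ∘ₗ ΔC) ∘ₗ α = lTensor D α ∘ₗ ΔD)
    -- `β : C □_D C → C` is a morphism of `C`-bicomodules:
    (β : C ⊗[K] C →ₗ[K] C)
    (hβl : ∀ x ∈ LinearMap.ker ((TensorProduct.assoc K C D C).toLinearMap
        ∘ₗ rTensor C (lTensor C lam ∘ₗ ΔC) - lTensor C (rTensor C lam ∘ₗ ΔC)),
      ΔC (β x) = (lTensor C β) ((TensorProduct.assoc K C C C) ((rTensor C ΔC) x)))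
    (hβr : ∀ x ∈ LinearMap.ker ((TensorProduct.assoc K C D C).toLinearMap
        ∘ₗ rTensor C (lTensor C lam ∘ₗ ΔC) - lTensor C (rTensor C lam ∘ₗ ΔC)),
      ΔC (β x) = (rTensor C β) ((TensorProduct.assoc K C C C).symm ((lTensor C ΔC) x)))
    -- `β∘(αλ⊗id)∘Δ = β∘(id⊗αλ)∘Δ = id`:
    (hβα₁ : ∀ c : C, β ((rTensor C (α ∘ₗ lam)) (ΔC c)) = c)
    (hβα₂ : ∀ c : C, β ((lTensor C (α ∘ₗ lam)) (ΔC c)) = c)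
    -- the `D*`-balancing relations in `C* ⊗_K C*`:
    (subD : Submodule K ((C →ₗ[K] K) ⊗[K] (C →ₗ[K] K)))
    (hsubD : subD = Submodule.span K {x | ∃ (g h : C →ₗ[K] K) (d : D →ₗ[K] K),
      x = convBilin ΔC g (d ∘ₗ lam) ⊗ₜ[K] h - g ⊗ₜ[K] convBilin ΔC (d ∘ₗ lam) h}) :
    -- conclusion: `D* → C*` is a Frobenius extension
    ∃ E : (C →ₗ[K] K) →ₗ[K] (D →ₗ[K] K),
      -- `E` is a morphism of `D*`-bimodules:
      (∀ (c : C →ₗ[K] K) (d : D →ₗ[K] K),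
        E (convBilin ΔC c (d ∘ₗ lam)) = convBilin ΔD (E c) d ∧
        E (convBilin ΔC (d ∘ₗ lam) c) = convBilin ΔD d (E c)) ∧
      ∃ u₀ : (C →ₗ[K] K) →ₗ[K] (C →ₗ[K] K) ⊗[K] (C →ₗ[K] K),
        -- `mk ∘ u₀ : C* → C* ⊗_{D*} C*` is a morphism of `C*`-bimodules:
        (∀ c x : C →ₗ[K] K,
          (Submodule.Quotient.mk (u₀ (convBilin ΔC c x))
              : @HasQuotient.Quotient _ _
                (@Submodule.hasQuotient K _ _ TensorProduct.addCommGroup _) subD)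
            = Submodule.Quotient.mk ((rTensor _ (convBilin ΔC c)) (u₀ x)) ∧
          (Submodule.Quotient.mk (u₀ (convBilin ΔC x c))
              : @HasQuotient.Quotient _ _
                (@Submodule.hasQuotient K _ _ TensorProduct.addCommGroup _) subD)
            = Submodule.Quotient.mk ((lTensor _ ((convBilin ΔC).flip c)) (u₀ x))) ∧
        -- `μ ∘ (λ*E ⊗ 1) ∘ u = 1`:
        (∀ c : C →ₗ[K] K, TensorProduct.lift (convBilin ΔC)
          ((rTensor _ (lam.dualMap ∘ₗ E)) (u₀ c)) = c) ∧
        -- `μ ∘ (1 ⊗ λ*E) ∘ u = 1`: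
        (∀ c : C →ₗ[K] K, TensorProduct.lift (convBilin ΔC)
          ((lTensor _ (lam.dualMap ∘ₗ E)) (u₀ c)) = c) := by
  classical
  set T : C ⊗[K] C →ₗ[K] C ⊗[K] (D ⊗[K] C) :=
    (TensorProduct.assoc K C D C).toLinearMap ∘ₗ rTensor C (lTensor C lam ∘ₗ ΔC)
      - lTensor C (rTensor C lam ∘ₗ ΔC) with hT
  let Φ : ((C →ₗ[K] K) ⊗[K] (C →ₗ[K] K)) ≃ₗ[K] ((C ⊗[K] C) →ₗ[K] K) :=
    TensorProduct.dualDistribEquiv K C C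
  have Φ_tmul : ∀ f g : C →ₗ[K] K, Φ (f ⊗ₜ[K] g) = ev2 f g := by
    intro f g
    show TensorProduct.dualDistrib K C C (f ⊗ₜ[K] g) = ev2 f g
    exact dualDistrib_eq_ev2 f g
  -- pure tensor functionals composed with T are the generators of subD:
  have L1 : ∀ (g h : C →ₗ[K] K) (d : D →ₗ[K] K),
      ev2 g (ev2 d h) ∘ₗ T
        = Φ (convBilin ΔC g (d ∘ₗ lam) ⊗ₜ[K] h - g ⊗ₜ[K] convBilin ΔC (d ∘ₗ lam) h) := by
    intro g h d
    rw [map_sub, Φ_tmul, Φ_tmul]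
    apply TensorProduct.ext'
    intro a b
    have h1 : ∀ t : C ⊗[K] C,
        ev2 g (ev2 d h) ((TensorProduct.assoc K C D C) ((lTensor C lam t) ⊗ₜ[K] b))
          = ev2 g (d ∘ₗ lam) t * h b := by
      intro t
      induction t using TensorProduct.induction_on with
      | zero => simp
      | tmul x y => simp [mul_assoc]
      | add x y hx hy => simp [TensorProduct.add_tmul, hx, hy, add_mul]
    have h2 : ∀ s : C ⊗[K] C,
        ev2 g (ev2 d h) (a ⊗ₜ[K] (rTensor C lam s)) = g a * ev2 (d ∘ₗ lam) h s := by
      intro s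
      induction s using TensorProduct.induction_on with
      | zero => simp
      | tmul x y => simp [mul_assoc]
      | add x y hx hy => simp [TensorProduct.tmul_add, hx, hy, mul_add]
    simp only [LinearMap.coe_comp, Function.comp_apply, hT, LinearMap.sub_apply,
      LinearEquiv.coe_coe, rTensor_tmul, lTensor_tmul, map_sub]
    rw [h1, h2]
    simp [convBilin_apply]
  -- the annihilator lemma:
  have AL : ∀ φ : (C ⊗[K] C) →ₗ[K] K, (∀ z ∈ LinearMap.ker T, φ z = 0) → Φ.symm φ ∈ subD := by
    intro φ hφ
    set W : Submodule K (C ⊗[K] (D ⊗[K] C)) := LinearMap.range T with hW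
    haveI : FiniteDimensional K W := by rw [hW]; exact Module.Finite.range T
    haveI : Module.Free K W := Module.Free.of_divisionRing K W
    haveI : FiniteDimensional K (Module.Dual K W) :=
      Module.Finite.of_basis (Module.finBasis K W).dualBasis
    let ψ : W →ₗ[K] K :=
      (((LinearMap.ker T).liftQ φ (fun z hz => LinearMap.mem_ker.mpr (hφ z hz))) ∘ₗ
        (T.quotKerEquivRange.symm.toLinearMap))
    have hψ : ∀ z : C ⊗[K] C, ψ (T.rangeRestrict z) = φ z := by
      intro z
      have h0 : T.quotKerEquivRange (Submodule.Quotient.mk z) = T.rangeRestrict z :=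
        Subtype.ext (T.quotKerEquivRange_apply_mk z)
      have h1 : T.quotKerEquivRange.symm (T.rangeRestrict z)
          = Submodule.Quotient.mk z := by
        rw [← h0, LinearEquiv.symm_apply_apply]
      simp only [ψ, LinearMap.coe_comp, Function.comp_apply, LinearEquiv.coe_coe, h1]
      exact Submodule.liftQ_apply _ _ _
    let Lmap : (W →ₗ[K] K) →ₗ[K] (C →ₗ[K] K) ⊗[K] (C →ₗ[K] K) :=
      Φ.symm.toLinearMap ∘ₗ (T.rangeRestrict).dualMap
    have hS : ∀ (g h : C →ₗ[K] K) (d : D →ₗ[K] K),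
        Lmap ((ev2 g (ev2 d h)) ∘ₗ W.subtype) ∈ subD := by
      intro g h d
      have hc : (ev2 g (ev2 d h) ∘ₗ W.subtype) ∘ₗ T.rangeRestrict = ev2 g (ev2 d h) ∘ₗ T :=
        LinearMap.ext fun z => rfl
      show Φ.symm ((T.rangeRestrict).dualMap (ev2 g (ev2 d h) ∘ₗ W.subtype)) ∈ subD
      rw [LinearMap.dualMap_apply', hc, L1, LinearEquiv.symm_apply_apply, hsubD]
      exact Submodule.subset_span ⟨g, h, d, rfl⟩
    set S : Set (W →ₗ[K] K) :=
      {χ | ∃ (g h : C →ₗ[K] K) (d : D →ₗ[K] K), χ = (ev2 g (ev2 d h)) ∘ₗ W.subtype} with hSdef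
    have hspan : Submodule.span K S = ⊤ := by
      have hco : (Submodule.span K S).dualCoannihilator = ⊥ := by
        rw [Submodule.eq_bot_iff]
        intro w hw
        rw [Submodule.mem_dualCoannihilator] at hw
        obtain ⟨z, hz⟩ := w
        have hz0 : z = 0 := by
          apply separates z
          intro g d h'
          have := hw ((ev2 g (ev2 d h')) ∘ₗ W.subtype)
            (Submodule.subset_span ⟨g, h', d, rfl⟩)
          simpa using this
        exact Subtype.ext hz0
      haveI : FiniteDimensional K (Submodule.span K S) := inferInstance
      have h4 := Subspace.dualCoannihilator_dualAnnihilator_eq (V := W)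
        (W := Submodule.span K S)
      rw [hco, Submodule.dualAnnihilator_bot] at h4
      exact h4.symm
    have hmem : ψ ∈ Submodule.comap Lmap subD := by
      have hle : Submodule.span K S ≤ Submodule.comap Lmap subD := by
        rw [Submodule.span_le]
        rintro χ ⟨g, h, d, rfl⟩
        exact hS g h d
      exact hle (hspan ▸ Submodule.mem_top)
    have hfinal : Lmap ψ = Φ.symm φ := by
      have h2 : (T.rangeRestrict).dualMap ψ = φ := LinearMap.ext hψ
      show Φ.symm ((T.rangeRestrict).dualMap ψ) = Φ.symm φ
      rw [h2]
    rw [← hfinal]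
    exact hmem
  refine ⟨α.dualMap, ?_, ?_⟩
  · intro c d
    constructor
    · apply LinearMap.ext
      intro x
      rw [LinearMap.dualMap_apply, convBilin_apply, convBilin_apply]
      have h2 : lTensor C lam (ΔC (α x)) = rTensor D α (ΔD x) := by
        simpa using LinearMap.congr_fun hαr x
      rw [← ev2_lTensor, h2, ev2_rTensor]
      rfl
    · apply LinearMap.ext
      intro x
      rw [LinearMap.dualMap_apply, convBilin_apply, convBilin_apply]
      have h2 : rTensor C lam (ΔC (α x)) = lTensor D α (ΔD x) := by
        simpa using LinearMap.congr_fun hαl x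
      rw [← ev2_rTensor, h2, ev2_lTensor]
      rfl
  · set u₀ : (C →ₗ[K] K) →ₗ[K] (C →ₗ[K] K) ⊗[K] (C →ₗ[K] K) :=
      Φ.symm.toLinearMap ∘ₗ β.dualMap with hu₀def
    have hu₀ : ∀ c : C →ₗ[K] K, Φ (u₀ c) = c ∘ₗ β := by
      intro c
      show Φ (Φ.symm (β.dualMap c)) = c ∘ₗ β
      rw [LinearEquiv.apply_symm_apply]
      rfl
    refine ⟨u₀, ?_, ?_, ?_⟩
    · intro c x
      constructor
      · rw [Submodule.Quotient.eq]
        have h0 : ∀ z ∈ LinearMap.ker T,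
            Φ (u₀ (convBilin ΔC c x)
              - rTensor (C →ₗ[K] K) (convBilin ΔC c) (u₀ x)) z = 0 := by
          intro z hz
          rw [map_sub, LinearMap.sub_apply, hu₀]
          have hR1 : ∀ (y : (C →ₗ[K] K) ⊗[K] (C →ₗ[K] K)) (w : C ⊗[K] C),
              Φ (rTensor (C →ₗ[K] K) (convBilin ΔC c) y) w
                = Φ y (rTensor C ((TensorProduct.lid K C).toLinearMap
                    ∘ₗ rTensor C c ∘ₗ ΔC) w) := by
            intro y w
            induction y using TensorProduct.induction_on with
            | zero => simp
            | tmul f g =>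
              rw [rTensor_tmul, Φ_tmul, Φ_tmul]
              induction w using TensorProduct.induction_on with
              | zero => simp
              | tmul a b =>
                simp only [ev2_tmul, rTensor_tmul, LinearMap.coe_comp, Function.comp_apply,
                  LinearEquiv.coe_coe]
                rw [convBilin_apply, ev2_eq_lid]
              | add w₁ w₂ hw₁ hw₂ => simp only [map_add, hw₁, hw₂]
            | add y₁ y₂ hy₁ hy₂ =>
              simp only [map_add, LinearMap.add_apply, hy₁, hy₂]
          rw [hR1, hu₀]
          have hz' := hβl z hz
          have hR2 : ∀ w : C ⊗[K] C,
              ev2 c x ((lTensor C β) ((TensorProduct.assoc K C C C) ((rTensor C ΔC) w)))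
              = (x ∘ₗ β) (rTensor C ((TensorProduct.lid K C).toLinearMap
                  ∘ₗ rTensor C c ∘ₗ ΔC) w) := by
            intro w
            induction w using TensorProduct.induction_on with
            | zero => simp
            | tmul a b =>
              have inner : ∀ t : C ⊗[K] C,
                  ev2 c x ((lTensor C β) ((TensorProduct.assoc K C C C) (t ⊗ₜ[K] b)))
                    = x (β (((TensorProduct.lid K C) (rTensor C c t)) ⊗ₜ[K] b)) := by
                intro t
                induction t using TensorProduct.induction_on with
                | zero => simp
                | tmul p q =>
                  simp [← TensorProduct.smul_tmul', smul_eq_mul]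
                | add t₁ t₂ ht₁ ht₂ =>
                  simp only [TensorProduct.add_tmul, map_add, ht₁, ht₂, LinearMap.map_add]
              simp only [rTensor_tmul, LinearMap.coe_comp, Function.comp_apply,
                LinearEquiv.coe_coe]
              exact inner (ΔC a)
            | add z₁ z₂ hz₁ hz₂ => simp only [map_add, hz₁, hz₂]
          have hc1 : ((convBilin ΔC c x) ∘ₗ β) z = ev2 c x (ΔC (β z)) := by
            rw [LinearMap.comp_apply, convBilin_apply]
          rw [hc1, hz', hR2 z, sub_self]
        have := AL _ h0
        rwa [LinearEquiv.symm_apply_apply] at this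
      · rw [Submodule.Quotient.eq]
        have h0 : ∀ z ∈ LinearMap.ker T,
            Φ (u₀ (convBilin ΔC x c)
              - lTensor (C →ₗ[K] K) ((convBilin ΔC).flip c) (u₀ x)) z = 0 := by
          intro z hz
          rw [map_sub, LinearMap.sub_apply, hu₀]
          have hR1 : ∀ (y : (C →ₗ[K] K) ⊗[K] (C →ₗ[K] K)) (w : C ⊗[K] C),
              Φ (lTensor (C →ₗ[K] K) ((convBilin ΔC).flip c) y) w
                = Φ y (lTensor C ((TensorProduct.rid K C).toLinearMap
                    ∘ₗ lTensor C c ∘ₗ ΔC) w) := by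
            intro y w
            induction y using TensorProduct.induction_on with
            | zero => simp
            | tmul f g =>
              rw [lTensor_tmul, Φ_tmul, Φ_tmul]
              induction w using TensorProduct.induction_on with
              | zero => simp
              | tmul a b =>
                simp only [ev2_tmul, lTensor_tmul, LinearMap.coe_comp, Function.comp_apply,
                  LinearEquiv.coe_coe, LinearMap.flip_apply]
                rw [convBilin_apply, ev2_eq_rid]
              | add w₁ w₂ hw₁ hw₂ => simp only [map_add, hw₁, hw₂]
            | add y₁ y₂ hy₁ hy₂ =>
              simp only [map_add, LinearMap.add_apply, hy₁, hy₂]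
          rw [hR1, hu₀]
          have hz' := hβr z hz
          have hR2 : ∀ w : C ⊗[K] C,
              ev2 x c ((rTensor C β)
                ((TensorProduct.assoc K C C C).symm ((lTensor C ΔC) w)))
              = (x ∘ₗ β) (lTensor C ((TensorProduct.rid K C).toLinearMap
                  ∘ₗ lTensor C c ∘ₗ ΔC) w) := by
            intro w
            induction w using TensorProduct.induction_on with
            | zero => simp
            | tmul a b =>
              have inner : ∀ t : C ⊗[K] C,
                  ev2 x c ((rTensor C β) ((TensorProduct.assoc K C C C).symm (a ⊗ₜ[K] t)))
                    = x (β (a ⊗ₜ[K] ((TensorProduct.rid K C) (lTensor C c t)))) := by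
                intro t
                induction t using TensorProduct.induction_on with
                | zero => simp
                | tmul p q =>
                  simp [TensorProduct.tmul_smul, smul_eq_mul, mul_comm]
                | add t₁ t₂ ht₁ ht₂ =>
                  simp only [TensorProduct.tmul_add, map_add, ht₁, ht₂, LinearMap.map_add]
              simp only [lTensor_tmul, LinearMap.coe_comp, Function.comp_apply,
                LinearEquiv.coe_coe]
              exact inner (ΔC b)
            | add z₁ z₂ hz₁ hz₂ => simp only [map_add, hz₁, hz₂]
          have hc1 : ((convBilin ΔC x c) ∘ₗ β) z = ev2 x c (ΔC (β z)) := by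
            rw [LinearMap.comp_apply, convBilin_apply]
          rw [hc1, hz', hR2 z, sub_self]
        have := AL _ h0
        rwa [LinearEquiv.symm_apply_apply] at this
    · intro c
      apply LinearMap.ext
      intro a
      have R3 : ∀ y : (C →ₗ[K] K) ⊗[K] (C →ₗ[K] K),
          TensorProduct.lift (convBilin ΔC)
              ((rTensor (C →ₗ[K] K) (lam.dualMap ∘ₗ α.dualMap)) y) a
            = Φ y ((rTensor C (α ∘ₗ lam)) (ΔC a)) := by
        intro y
        induction y using TensorProduct.induction_on with
        | zero => simp
        | tmul f g =>
          rw [rTensor_tmul, TensorProduct.lift.tmul, Φ_tmul, ev2_rTensor]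
          have hcomp : (lam.dualMap ∘ₗ α.dualMap) f = f ∘ₗ (α ∘ₗ lam) := rfl
          rw [hcomp, convBilin_apply]
        | add y₁ y₂ hy₁ hy₂ => simp only [map_add, LinearMap.add_apply, hy₁, hy₂]
      rw [R3, hu₀]
      show c (β ((rTensor C (α ∘ₗ lam)) (ΔC a))) = c a
      rw [hβα₁]
    · intro c
      apply LinearMap.ext
      intro a
      have R4 : ∀ y : (C →ₗ[K] K) ⊗[K] (C →ₗ[K] K),
          TensorProduct.lift (convBilin ΔC)
              ((lTensor (C →ₗ[K] K) (lam.dualMap ∘ₗ α.dualMap)) y) a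
            = Φ y ((lTensor C (α ∘ₗ lam)) (ΔC a)) := by
        intro y
        induction y using TensorProduct.induction_on with
        | zero => simp
        | tmul f g =>
          rw [lTensor_tmul, TensorProduct.lift.tmul, Φ_tmul, ev2_lTensor]
          have hcomp : (lam.dualMap ∘ₗ α.dualMap) g = g ∘ₗ (α ∘ₗ lam) := rfl
          rw [hcomp, convBilin_apply]
        | add y₁ y₂ hy₁ hy₂ => simp only [map_add, LinearMap.add_apply, hy₁, hy₂]
      rw [R4, hu₀]
      show c (β ((lTensor C (α ∘ₗ lam)) (ΔC a))) = c a
      rw [hβα₂]
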